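/- Let A be an algebra, M, N finite-dimensional A-modules, M₁ ⊆ M and N₁ ⊆ N submodules. An extension class ε ∈ Ext¹_A(M, N) with representative 0 → N →^ι L →^π M → 0 admits a submodule L₁ ⊆ L with ι^{-1}(L₁) = N₁ and π(L₁) = M₁ if and only if the pulled-back and restricted class ι_{M₁}^*(ε) ∈ Ext¹_A(M₁, N) lies in the image of (ι_{N₁})_* : Ext¹_A(M₁, N₁) → Ext¹_A(M₁, N), where ι_{M₁} : M₁ → M and ι_{N₁} : N₁ → N are the inclusions. -/

import Mathlib

open LinearMap

/-!
A submodule `L₁ ⊆ N × M` with `ι⁻¹ L₁ = N₁` and `π L₁ = M₁` is determined by `N₁` and a linear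
section `m ↦ (φ m, m)` of `π : L₁ → M₁` (which exists because `M₁` is projective, e.g. over a
field): `L₁ = {(n + φ m, m) | n ∈ N₁, m ∈ M₁}`. Such a family is a subrepresentation of `L(d)`
exactly when `d_e m + N_e (φ m) - φ (M_e m) ∈ N₁` for all `m ∈ M₁`, i.e. when `d` restricted
to `M₁` is a cocycle with values in `N₁` up to the coboundary of `φ`.
-/

namespace Submodule

variable {R N M N' M' : Type*} [Ring R]
  [AddCommGroup N] [Module R N] [AddCommGroup M] [Module R M]
  [AddCommGroup N'] [Module R N'] [AddCommGroup M'] [Module R M']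
  {N₁ : Submodule R N} {M₁ : Submodule R M} {N₁' : Submodule R N'} {M₁' : Submodule R M'}

def prodGraph (N₁ : Submodule R N) (M₁ : Submodule R M) (φ : M₁ →ₗ[R] N) :
    Submodule R (N × M) :=
  range ((N₁.subtype.coprod φ).prod (M₁.subtype ∘ₗ LinearMap.snd R N₁ M₁))

theorem mem_prodGraph {φ : M₁ →ₗ[R] N} {x : N × M} :
    x ∈ prodGraph N₁ M₁ φ ↔ ∃ hx : x.2 ∈ M₁, x.1 - φ ⟨x.2, hx⟩ ∈ N₁ := by
  constructor
  · rintro ⟨⟨n, m⟩, rfl⟩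
    exact ⟨m.2, by simp⟩
  · rintro ⟨hx, hN⟩
    exact ⟨(⟨_, hN⟩, ⟨x.2, hx⟩), by ext <;> simp⟩

theorem comap_inl_prodGraph (φ : M₁ →ₗ[R] N) :
    (prodGraph N₁ M₁ φ).comap (LinearMap.inl R N M) = N₁ := by
  ext n
  have hφ0 : φ ⟨0, M₁.zero_mem⟩ = 0 := map_zero φ
  simp [mem_prodGraph, hφ0]

theorem map_snd_prodGraph (φ : M₁ →ₗ[R] N) :
    (prodGraph N₁ M₁ φ).map (LinearMap.snd R N M) = M₁ := by
  ext m
  constructor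
  · rintro ⟨x, hx, rfl⟩
    exact (mem_prodGraph.1 hx).1
  · intro hm
    exact ⟨(φ ⟨m, hm⟩, m), mem_prodGraph.2 ⟨hm, by simp⟩, rfl⟩

theorem exists_prod_mem_of_map_snd_eq [Module.Projective R M₁] {L : Submodule R (N × M)}
    (hL : L.map (LinearMap.snd R N M) = M₁) : ∃ φ : M₁ →ₗ[R] N, ∀ m : M₁, (φ m, (m : M)) ∈ L := by
  subst hL
  obtain ⟨σ, hσ⟩ := ((LinearMap.snd R N M).submoduleMap L).exists_rightInverse_of_surjective
    (range_eq_top.2 (submoduleMap_surjective _ _))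
  refine ⟨LinearMap.fst R N M ∘ₗ L.subtype ∘ₗ σ, fun m => ?_⟩
  have hsnd : (σ m : N × M).2 = m := congr_arg Subtype.val (LinearMap.congr_fun hσ m)
  have hσm : ((LinearMap.fst R N M ∘ₗ L.subtype ∘ₗ σ) m, (m : M)) = σ m :=
    Prod.ext rfl hsnd.symm
  exact hσm ▸ (σ m).2

theorem comap_inl_eq_and_map_snd_eq_iff [Module.Projective R M₁] {L : Submodule R (N × M)} :
    L.comap (LinearMap.inl R N M) = N₁ ∧ L.map (LinearMap.snd R N M) = M₁ ↔
      ∃ φ : M₁ →ₗ[R] N, L = prodGraph N₁ M₁ φ := by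
  refine ⟨fun ⟨hN, hM⟩ => ?_, fun ⟨φ, hL⟩ => hL ▸ ⟨comap_inl_prodGraph φ, map_snd_prodGraph φ⟩⟩
  obtain ⟨φ, hφ⟩ := exists_prod_mem_of_map_snd_eq hM
  refine ⟨φ, ext fun x => ?_⟩
  rw [mem_prodGraph, ← hN]
  simp only [mem_comap, LinearMap.inl_apply]
  constructor
  · intro hx
    have h2 : x.2 ∈ M₁ := hM ▸ mem_map_of_mem hx
    refine ⟨h2, ?_⟩
    convert L.sub_mem hx (hφ ⟨x.2, h2⟩) using 1
    ext <;> simp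
  · rintro ⟨h2, h1⟩
    convert L.add_mem h1 (hφ ⟨x.2, h2⟩) using 1
    ext <;> simp

theorem prodGraph_mapsTo_iff (g : N →ₗ[R] N') (h : M →ₗ[R] M') (d : M →ₗ[R] N')
    (hg : ∀ x ∈ N₁, g x ∈ N₁') (hh : ∀ x ∈ M₁, h x ∈ M₁') (φ : M₁ →ₗ[R] N) (φ' : M₁' →ₗ[R] N') :
    (∀ x ∈ prodGraph N₁ M₁ φ,
        ((g ∘ₗ LinearMap.fst R N M + d ∘ₗ LinearMap.snd R N M).prod (h ∘ₗ LinearMap.snd R N M)) x ∈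
          prodGraph N₁' M₁' φ') ↔
      ∀ m : M₁, d m + g (φ m) - φ' (h.restrict hh m) ∈ N₁' := by
  constructor
  · intro H m
    obtain ⟨_, hm⟩ := mem_prodGraph.1 (H (φ m, m) (mem_prodGraph.2 ⟨m.2, by simp⟩))
    convert hm using 1
    simp [restrict_apply, add_comm]
  · rintro H _ ⟨⟨n, m⟩, rfl⟩
    refine mem_prodGraph.2 ⟨hh m m.2, ?_⟩
    convert N₁'.add_mem (hg n n.2) (H m) using 1
    simp only [LinearMap.prod_apply, coe_comp, coe_subtype, coe_snd, Function.prod_apply,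
      coprod_apply, subtype_apply, Function.comp_apply, LinearMap.add_apply, coe_fst, map_add,
      restrict_apply]
    abel

theorem prodGraph_mapsTo_iff_exists_cohomologous (g : N →ₗ[R] N') (h : M →ₗ[R] M')
    (d : M →ₗ[R] N') (hg : ∀ x ∈ N₁, g x ∈ N₁') (hh : ∀ x ∈ M₁, h x ∈ M₁') (φ : M₁ →ₗ[R] N)
    (φ' : M₁' →ₗ[R] N') :
    (∀ x ∈ prodGraph N₁ M₁ φ,
        ((g ∘ₗ LinearMap.fst R N M + d ∘ₗ LinearMap.snd R N M).prod (h ∘ₗ LinearMap.snd R N M)) x ∈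
          prodGraph N₁' M₁' φ') ↔
      ∃ d' : M₁ →ₗ[R] N₁',
        d ∘ₗ M₁.subtype = N₁'.subtype ∘ₗ d' + φ' ∘ₗ h.restrict hh - g ∘ₗ φ := by
  rw [prodGraph_mapsTo_iff g h d hg hh]
  constructor
  · intro H
    have H' : ∀ m, (d ∘ₗ M₁.subtype + g ∘ₗ φ - φ' ∘ₗ h.restrict hh) m ∈ N₁' := H
    refine ⟨LinearMap.codRestrict N₁' _ H', ?_⟩
    rw [LinearMap.subtype_comp_codRestrict]
    abel
  · rintro ⟨d', hd'⟩ m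
    have hm := LinearMap.congr_fun hd' m
    simp only [coe_comp, coe_subtype, Function.comp_apply, LinearMap.sub_apply,
      LinearMap.add_apply] at hm
    rw [hm]
    convert (d' m).2 using 1
    abel

end Submodule

open Submodule in
/-- The extension `ε` is encoded by the cocycle `d`: its middle term `L(d)` has spaces `N_v × M_v`
and maps `Ld e (n, m) = (N_e n + d_e m, M_e m)`. On the right, `d'` is a cocycle of `Ext¹(M₁, N₁)`
and `φ` a cochain whose coboundary accounts for the difference between `d` restricted to `M₁`
and the pushforward of `d'`. -/
theorem submodule_of_middle_term_iff_restriction_in_pushforward_image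
    (k : Type*) [Field k] (V E : Type*) (s t : E → V)
    (M N : V → Type*)
    [∀ v, AddCommGroup (M v)] [∀ v, Module k (M v)]
    [∀ v, AddCommGroup (N v)] [∀ v, Module k (N v)]
    (Mf : ∀ e, M (s e) →ₗ[k] M (t e)) (Nf : ∀ e, N (s e) →ₗ[k] N (t e))
    (M₁ : ∀ v, Submodule k (M v)) (N₁ : ∀ v, Submodule k (N v))
    (hM₁ : ∀ e, ∀ x ∈ M₁ (s e), Mf e x ∈ M₁ (t e))
    (hN₁ : ∀ e, ∀ x ∈ N₁ (s e), Nf e x ∈ N₁ (t e))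
    (d : ∀ e, M (s e) →ₗ[k] N (t e))
    (Ld : ∀ e, (N (s e) × M (s e)) →ₗ[k] (N (t e) × M (t e)))
    (hLd : Ld = fun e =>
      ((Nf e).comp (LinearMap.fst k (N (s e)) (M (s e)))
          + (d e).comp (LinearMap.snd k (N (s e)) (M (s e)))).prod
        ((Mf e).comp (LinearMap.snd k (N (s e)) (M (s e))))) :
    (∃ L₁ : ∀ v, Submodule k (N v × M v),
        (∀ e, ∀ x ∈ L₁ (s e), Ld e x ∈ L₁ (t e)) ∧
        (∀ v, (L₁ v).comap (LinearMap.inl k (N v) (M v)) = N₁ v) ∧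
        (∀ v, (L₁ v).map (LinearMap.snd k (N v) (M v)) = M₁ v))
      ↔
    (∃ (d' : ∀ e, (M₁ (s e)) →ₗ[k] (N₁ (t e))) (φ : ∀ v, (M₁ v) →ₗ[k] N v),
        ∀ e, (d e).comp (M₁ (s e)).subtype =
          (N₁ (t e)).subtype.comp (d' e)
            + (φ (t e)).comp ((Mf e).restrict (hM₁ e))
            - (Nf e).comp (φ (s e))) := by
  subst hLd
  have hL (φ : ∀ v, M₁ v →ₗ[k] N v) (e : E) :=
    prodGraph_mapsTo_iff_exists_cohomologous (Nf e) (Mf e) (d e) (hN₁ e) (hM₁ e)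
      (φ (s e)) (φ (t e))
  constructor
  · rintro ⟨L₁, hinv, hcomap, hmap⟩
    choose φ hφ using fun v => comap_inl_eq_and_map_snd_eq_iff.1 ⟨hcomap v, hmap v⟩
    obtain rfl : L₁ = fun v => prodGraph (N₁ v) (M₁ v) (φ v) := funext hφ
    choose d' hd' using fun e => (hL φ e).1 (hinv e)
    exact ⟨d', φ, hd'⟩
  · rintro ⟨d', φ, hd'⟩
    exact ⟨fun v => prodGraph (N₁ v) (M₁ v) (φ v), fun e => (hL φ e).2 ⟨d' e, hd' e⟩,
      fun v => comap_inl_prodGraph (φ v), fun v => map_snd_prodGraph (φ v)⟩
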